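/- arXiv:2509.19862 — 4 statements merged into one kernel-verified Lean document; each statement's English description precedes it below -/
import Mathlib

section
/- Fix real numbers a, b with 0 < a < 1 < b and b = a/(2a - 1) (so a > 1/2). Then for every integer d ≥ 1 and every κ ∈ (a, b), one has ((b/a)^d - 1)((b/a)^d + 1 - 2κ) > 0, and for every integer d ≤ -1 and every κ ∈ (a, b), one has ((b/a)^d - 1)((b/a)^d + 1 - 2κ) > 0. -/
/-!
The relation `b = a / (2a - 1)` says `a + b = 2ab`, i.e. `1` is the harmonic mean of `a` and `b`,
so `b > 1` forces `0 < a < b`, and the grid ratio satisfies `b / a = 2b - 1` and `a / b = 2a - 1`.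
For `d ≥ 1` the power `(b / a) ^ d` is at least `b / a = 2b - 1 > 2κ - 1`, and both factors are
positive; for `d ≤ -1` it is at most `a / b = 2a - 1 < 2κ - 1`, and both factors are negative.
-/

namespace DiffusiveGrid

section HarmonicMeanOne

variable {a b : ℝ}

theorem add_eq_two_mul_mul_of_eq_div (hb1 : 1 < b) (hb : b = a / (2 * a - 1)) :
    a + b = 2 * a * b := by
  have hden : 2 * a - 1 ≠ 0 := by
    rintro h
    rw [h, div_zero] at hb
    linarith
  have : b * (2 * a - 1) = a := by rw [hb, div_mul_cancel₀ a hden]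
  linarith

theorem pos_of_add_eq_two_mul_mul (h : a + b = 2 * a * b) (hb1 : 1 < b) : 0 < a := by
  nlinarith

theorem lt_of_add_eq_two_mul_mul (h : a + b = 2 * a * b) (hb1 : 1 < b) : a < b := by
  nlinarith

theorem div_eq_two_mul_sub_one (h : a + b = 2 * a * b) (ha : a ≠ 0) : b / a = 2 * b - 1 := by
  field_simp
  linarith

end HarmonicMeanOne

theorem mul_pos_of_one_lt_of_two_mul_sub_one_le {x κ c : ℝ} (hx : 1 < x) (hcx : 2 * c - 1 ≤ x)
    (hκ : κ < c) : 0 < (x - 1) * (x + 1 - 2 * κ) :=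
  mul_pos (by linarith) (by linarith)

theorem mul_pos_of_lt_one_of_le_two_mul_sub_one {x κ c : ℝ} (hx : x < 1) (hxc : x ≤ 2 * c - 1)
    (hκ : c < κ) : 0 < (x - 1) * (x + 1 - 2 * κ) :=
  mul_pos_of_neg_of_neg (by linarith) (by linarith)

end DiffusiveGrid

open DiffusiveGrid in
theorem diffusive_grid_positivity_general (a b : ℝ) (hb1 : 1 < b)
    (hb : b = a / (2 * a - 1)) :
    (∀ d : ℤ, 1 ≤ d → ∀ κ ∈ Set.Ioo a b,
      ((b / a) ^ d - 1) * ((b / a) ^ d + 1 - 2 * κ) > 0) ∧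
    (∀ d : ℤ, d ≤ -1 → ∀ κ ∈ Set.Ioo a b,
      ((b / a) ^ d - 1) * ((b / a) ^ d + 1 - 2 * κ) > 0) := by
  have hsum := add_eq_two_mul_mul_of_eq_div hb1 hb
  have ha := pos_of_add_eq_two_mul_mul hsum hb1
  have hab := lt_of_add_eq_two_mul_mul hsum hb1
  have hb0 : 0 < b := ha.trans hab
  have hr : 1 < b / a := (one_lt_div ha).2 hab
  refine ⟨fun d hd κ hκ => ?_, fun d hd κ hκ => ?_⟩
  · have hrd : b / a ≤ (b / a) ^ d := by
      simpa using zpow_le_zpow_right₀ hr.le hd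
    exact mul_pos_of_one_lt_of_two_mul_sub_one_le (hr.trans_le hrd)
      ((div_eq_two_mul_sub_one hsum ha.ne').ge.trans hrd) hκ.2
  · have hrd : (b / a) ^ d ≤ a / b := by
      simpa using zpow_le_zpow_right₀ hr.le hd
    have hlt : (b / a) ^ d < 1 := hrd.trans_lt ((div_lt_one hb0).2 hab)
    exact mul_pos_of_lt_one_of_le_two_mul_sub_one hlt
      (hrd.trans (div_eq_two_mul_sub_one (by linarith) hb0.ne').le) hκ.1

theorem diffusive_grid_positivity (a b : ℝ) (ha0 : 0 < a) (ha1 : a < 1) (hb1 : 1 < b)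
    (hb : b = a / (2 * a - 1)) :
    (∀ d : ℤ, 1 ≤ d → ∀ κ ∈ Set.Ioo a b,
      ((b / a) ^ d - 1) * ((b / a) ^ d + 1 - 2 * κ) > 0) ∧
    (∀ d : ℤ, d ≤ -1 → ∀ κ ∈ Set.Ioo a b,
      ((b / a) ^ d - 1) * ((b / a) ^ d + 1 - 2 * κ) > 0) :=
  diffusive_grid_positivity_general a b hb1 hb
end

section
/- Let 0 < a < 1 < b satisfy a - b + a·b·log(b/a) = 0. Define ψ_d(κ) = 1 - (b/a)^d + κ·d·log(b/a) for an integer d and real κ. Then for all d ≥ 1 and κ ∈ (a, b), ψ_d(κ) < 0, and for all d ≤ -1 and κ ∈ (a, b), ψ_d(κ) < 0. -/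
theorem jump_grid_psi_neg (a b : ℝ) (ha0 : 0 < a) (ha1 : a < 1) (hb1 : 1 < b)
    (hab : a - b + a * b * Real.log (b / a) = 0) :
    (∀ d : ℤ, 1 ≤ d → ∀ κ ∈ Set.Ioo a b,
      1 - (b / a) ^ d + κ * (d : ℝ) * Real.log (b / a) < 0) ∧
    (∀ d : ℤ, d ≤ -1 → ∀ κ ∈ Set.Ioo a b,
      1 - (b / a) ^ d + κ * (d : ℝ) * Real.log (b / a) < 0) := by
  have hb0 : (0:ℝ) < b := lt_trans one_pos hb1
  have hr1 : 1 < b / a := (one_lt_div ha0).2 (ha1.trans hb1)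
  set r := b / a with hrdef
  set L := Real.log r with hLdef
  have hL : 0 < L := Real.log_pos hr1
  have habL : a * b * L = b - a := by linarith
  have hbL : b * L = r - 1 := by
    rw [hrdef]; field_simp; linarith [habL]
  have haL : a * L = 1 - r⁻¹ := by
    rw [hrdef]
    rw [inv_div]
    field_simp
    linarith [habL]
  constructor
  · intro d hd κ hκ
    obtain ⟨n, rfl⟩ : ∃ n : ℕ, d = (n : ℤ) :=
      ⟨d.toNat, (Int.toNat_of_nonneg (by linarith)).symm⟩
    have hn1 : (1:ℝ) ≤ (n:ℝ) := by exact_mod_cast (by exact_mod_cast hd : (1:ℤ) ≤ (n:ℤ))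
    rw [zpow_natCast]
    have hbern : 1 + (n:ℝ) * (r - 1) ≤ r ^ n := by
      have := one_add_mul_le_pow (a := r - 1) (by linarith) n
      simpa using this
    have hnl : 0 < (n:ℝ) * L := mul_pos (by linarith) hL
    have h1 : κ * (n:ℝ) * L < b * (n:ℝ) * L := by
      have := mul_lt_mul_of_pos_right hκ.2 hnl
      nlinarith [this]
    have hb2 : b * (n:ℝ) * L = (n:ℝ) * (r - 1) := by
      rw [← hbL]; ring
    push_cast
    linarith [hbern, h1, hb2.le]
  · intro d hd κ hκ
    obtain ⟨n, rfl⟩ : ∃ n : ℕ, d = -(n : ℤ) :=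
      ⟨(-d).toNat, by rw [Int.toNat_of_nonneg (by linarith)]; ring⟩
    have hn1 : (1:ℝ) ≤ (n:ℝ) := by
      have : (1:ℤ) ≤ (n:ℤ) := by omega
      exact_mod_cast this
    have hs0 : 0 < r⁻¹ := inv_pos.2 (lt_trans one_pos hr1)
    have hpow : r ^ (-(n:ℤ)) = (r⁻¹) ^ n := by
      rw [zpow_neg, zpow_natCast, inv_pow]
    rw [hpow]
    have hbern : 1 + (n:ℝ) * (r⁻¹ - 1) ≤ (r⁻¹) ^ n := by
      have := one_add_mul_le_pow (a := r⁻¹ - 1) (by linarith) n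
      simpa using this
    have hnl : 0 < (n:ℝ) * L := mul_pos (by linarith) hL
    have h1 : a * (n:ℝ) * L < κ * (n:ℝ) * L := by
      have := mul_lt_mul_of_pos_right hκ.1 hnl
      nlinarith [this]
    have ha2 : a * (n:ℝ) * L = (n:ℝ) * (1 - r⁻¹) := by
      rw [← haL]; ring
    push_cast
    nlinarith [hbern, h1, ha2]
end

section
/- For all ε with 1 < ε < (√13 - 1)/2 and all r ≥ 0, 1 - ε² + (ε + r)·log((ε² + r)/(1 + r)) < 0. -/
/-!
With `q = (ε² + r)/(1 + r) > 1` the claim reads `(ε + r) log q < (1 + r)(q - 1)`. The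
logarithmic–geometric mean inequality `log q < (q - 1)/√q` (which is `t < sinh t` at
`t = log √q`) reduces it to `ε + r ≤ (1 + r)√q`, i.e. to the Cauchy–Schwarz inequality
`(ε + r)² ≤ (1 + r)(ε² + r)`, whose defect is `r (ε - 1)²`.
-/

open Real

theorem Real.log_lt_sub_inv_div_two {x : ℝ} (hx : 1 < x) : log x < (x - x⁻¹) / 2 := by
  rw [← sinh_log (by linarith)]
  exact self_lt_sinh_iff.2 (log_pos hx)

theorem Real.log_lt_sub_one_div_sqrt {x : ℝ} (hx : 1 < x) : log x < (x - 1) / √x := by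
  have hs : 1 < √x := by rwa [lt_sqrt zero_le_one, one_pow]
  calc log x = 2 * log √x := by rw [log_sqrt (by linarith)]; ring
    _ < √x - (√x)⁻¹ := by linarith [log_lt_sub_inv_div_two hs]
    _ = (x - 1) / √x := by
      field_simp
      rw [sq_sqrt (by linarith)]

theorem M3_bound_general (ε r : ℝ) (hε1 : 1 < ε) (hr : 0 ≤ r) :
    1 - ε ^ 2 + (ε + r) * Real.log ((ε ^ 2 + r) / (1 + r)) < 0 := by
  set q := (ε ^ 2 + r) / (1 + r) with hq
  have hr1 : 0 < 1 + r := by linarith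
  have hq_sub : (1 + r) * (q - 1) = ε ^ 2 - 1 := by rw [hq]; field_simp; ring
  have hq1 : 1 < q := by
    rw [hq, one_lt_div hr1]; nlinarith
  have hsq : 0 < √q := sqrt_pos.2 (by linarith)
  have hcs : ε + r ≤ (1 + r) * √q := by
    rw [← div_le_iff₀' hr1, le_sqrt (by positivity) (by positivity), div_pow, hq,
      div_le_div_iff₀ (by positivity) hr1]
    nlinarith [mul_nonneg hr (sq_nonneg (ε - 1))]
  calc 1 - ε ^ 2 + (ε + r) * log q
      < 1 - ε ^ 2 + (ε + r) * ((q - 1) / √q) := by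
        gcongr; exact log_lt_sub_one_div_sqrt hq1
    _ ≤ 1 - ε ^ 2 + (1 + r) * √q * ((q - 1) / √q) := by gcongr
    _ = 1 - ε ^ 2 + (1 + r) * (q - 1) := by field_simp
    _ = 0 := by rw [hq_sub]; ring

theorem M3_bound (ε r : ℝ) (hε1 : 1 < ε) (hε2 : ε < (Real.sqrt 13 - 1) / 2) (hr : 0 ≤ r) :
    1 - ε ^ 2 + (ε + r) * Real.log ((ε ^ 2 + r) / (1 + r)) < 0 :=
  M3_bound_general ε r hε1 hr
end

section
/- Fix p > 1 and positive reals L, U (think L = λ·|c_j|², U = Υ_j). For d ≥ 1 and b' > 1 with b'·L ≤ p^d·L (i.e. b' ≤ p^d), one has (b'L + U)/(p^d L + U) ≤ 1, and hence ((b'L + U)/(L + U))·log((p^{d+1}L + U)/(p^d L + U)) + (p^d L (1 - p))/(L + U) ≤ (p^d L (p - 1)/(L + U))·((b'L + U)/(p^d L + U) - 1) ≤ 0. -/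
theorem jump_monotone_shot_noise (p L U b' : ℝ) (d : ℕ) (hp : 1 < p) (hL : 0 < L)
    (hU : 0 < U) (hd : 1 ≤ d) (hb' : 1 < b') (hb'p : b' ≤ p ^ d) :
    (b' * L + U) / (p ^ d * L + U) ≤ 1 ∧
    ((b' * L + U) / (L + U)) * Real.log ((p ^ (d + 1) * L + U) / (p ^ d * L + U)) +
        (p ^ d * L * (1 - p)) / (L + U)
      ≤ (p ^ d * L * (p - 1) / (L + U)) * ((b' * L + U) / (p ^ d * L + U) - 1) ∧
    (p ^ d * L * (p - 1) / (L + U)) * ((b' * L + U) / (p ^ d * L + U) - 1) ≤ 0 := by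
  have hpd : (0:ℝ) < p ^ d := pow_pos (by linarith) d
  have hA : (0:ℝ) < p ^ d * L + U := by positivity
  have hLU : (0:ℝ) < L + U := by linarith
  have hB : (0:ℝ) < p ^ (d+1) * L + U := by positivity
  have hnum : b' * L + U ≤ p ^ d * L + U := by nlinarith
  have h1 : (b' * L + U) / (p ^ d * L + U) ≤ 1 := (div_le_one hA).2 hnum
  refine ⟨h1, ?_, ?_⟩
  · have hlog : Real.log ((p ^ (d + 1) * L + U) / (p ^ d * L + U))
        ≤ (p ^ (d + 1) * L + U) / (p ^ d * L + U) - 1 :=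
      Real.log_le_sub_one_of_pos (div_pos hB hA)
    have hratio : (p ^ (d + 1) * L + U) / (p ^ d * L + U) - 1
        = p ^ d * L * (p - 1) / (p ^ d * L + U) := by
      rw [pow_succ]
      field_simp
      ring
    rw [hratio] at hlog
    have hcoef : 0 ≤ (b' * L + U) / (L + U) := by positivity
    have h2 : ((b' * L + U) / (L + U)) * Real.log ((p ^ (d + 1) * L + U) / (p ^ d * L + U))
        ≤ ((b' * L + U) / (L + U)) * (p ^ d * L * (p - 1) / (p ^ d * L + U)) :=
      mul_le_mul_of_nonneg_left hlog hcoef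
    have heq : ((b' * L + U) / (L + U)) * (p ^ d * L * (p - 1) / (p ^ d * L + U))
        + (p ^ d * L * (1 - p)) / (L + U)
        = (p ^ d * L * (p - 1) / (L + U)) * ((b' * L + U) / (p ^ d * L + U) - 1) := by
      field_simp
      ring
    linarith
  · apply mul_nonpos_of_nonneg_of_nonpos
    · have h : (0:ℝ) < p - 1 := by linarith
      positivity
    · linarith
end
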